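/- arXiv:1906.08843 — 2 statements merged into one kernel-verified Lean document; each statement's English description precedes it below -/
import Mathlib

section
/- Under the setting of the previous statement (a mixture CDF F̄ where a fraction at least q of the components equal G(·/σ) with G continuous strictly increasing), for any 0 < p < 1 with (1-p)/q < 1, the p-th quantile ξ = F̄^{-1}(p) satisfies ξ ≥ σ · G^{-1}(1 - (1-p)/q). -/
open Finset

/-- Lower bound on the p-th quantile of a mixture CDF in which at least a
fraction `q` of the components equal `G(·/σ)` for a continuous strictly
increasing CDF `G`. -/
theorem mixture_quantile_lower_bound
    (N : ℕ) (hN : 0 < N) (F : Fin N → ℝ → ℝ)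
    (hFmono : ∀ j, Monotone (F j))
    (hF0 : ∀ j x, 0 ≤ F j x) (hF1 : ∀ j x, F j x ≤ 1)
    (hFbot : ∀ j, Filter.Tendsto (F j) Filter.atBot (nhds 0))
    (hFtop : ∀ j, Filter.Tendsto (F j) Filter.atTop (nhds 1))
    (G Ginv : ℝ → ℝ) (hG : StrictMono G) (hGcont : Continuous G)
    (hGinv : ∀ y, 0 < y → y < 1 → G (Ginv y) = y)
    (σ : ℝ) (hσ : 0 < σ)
    (q : ℝ) (hq0 : 0 < q) (hq1 : q ≤ 1)
    (S : Finset (Fin N)) (hScard : q * N ≤ S.card)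
    (hSgood : ∀ j ∈ S, ∀ x, F j x = G (x / σ))
    (p : ℝ) (hp0 : 0 < p) (hp1 : p < 1) (hpq : (1 - p) / q < 1) :
    σ * Ginv (1 - (1 - p) / q) ≤ sInf {x : ℝ | p ≤ (∑ j, F j x) / N} := by
  have hNpos : (0:ℝ) < N := by exact_mod_cast hN
  -- nonemptiness of the set
  have hne : {x : ℝ | p ≤ (∑ j, F j x) / N}.Nonempty := by
    have hsum : Filter.Tendsto (fun x => (∑ j, F j x) / N) Filter.atTop
        (nhds ((N : ℝ) / N)) := by
      have : Filter.Tendsto (fun x => (∑ j, F j x)) Filter.atTop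
          (nhds (∑ _j : Fin N, (1:ℝ))) := tendsto_finset_sum _ (fun j _ => hFtop j)
      simpa using this.div_const (N : ℝ)
    rw [div_self hNpos.ne'] at hsum
    have := hsum.eventually_const_le hp1
    rcases this.exists with ⟨x, hx⟩
    exact ⟨x, hx⟩
  -- key quantities
  have hfrac : (0:ℝ) < (1 - p) / q := div_pos (by linarith) hq0
  have hy0 : (0:ℝ) < 1 - (1 - p) / q := by linarith
  have hy1 : 1 - (1 - p) / q < 1 := by linarith
  have hGt : G (Ginv (1 - (1 - p) / q)) = 1 - (1 - p) / q := hGinv _ hy0 hy1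
  apply le_csInf hne
  intro x hx
  simp only [Set.mem_setOf_eq] at hx
  by_contra hcon
  push_neg at hcon
  -- then G(x/σ) < 1 - (1-p)/q
  have hxd : x / σ < Ginv (1 - (1 - p) / q) := by
    rw [div_lt_iff₀' hσ] at *; exact hcon
  have hg : G (x / σ) < 1 - (1 - p) / q := by
    calc G (x / σ) < G (Ginv (1 - (1 - p) / q)) := hG hxd
    _ = _ := hGt
  set g := G (x / σ) with hgdef
  have hsumle : (∑ j, F j x) ≤ S.card * g + (N - S.card) := by
    have : (∑ j, F j x) = (∑ j ∈ S, F j x) + (∑ j ∈ Sᶜ, F j x) := by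
      rw [Finset.sum_add_sum_compl]
    rw [this]
    have h1 : (∑ j ∈ S, F j x) = S.card * g := by
      rw [Finset.sum_congr rfl (fun j hj => hSgood j hj x)]
      simp [mul_comm]
      exact Or.inl rfl
    have h2 : (∑ j ∈ Sᶜ, F j x) ≤ (Sᶜ.card : ℝ) := by
      calc (∑ j ∈ Sᶜ, F j x) ≤ ∑ _j ∈ Sᶜ, (1:ℝ) :=
        Finset.sum_le_sum (fun j _ => hF1 j x)
      _ = Sᶜ.card := by simp
    have h3 : (Sᶜ.card : ℝ) = N - S.card := by
      rw [Finset.card_compl, Nat.cast_sub (by simpa using Finset.card_le_univ S)]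
      simp
    linarith [h1, h2, h3]
  have h1g : (1 - p) / q < 1 - g := by linarith
  have hkey : (N : ℝ) * (1 - p) < S.card * (1 - g) := by
    have h1 : (N : ℝ) * (1 - p) = (q * N) * ((1 - p) / q) := by
      field_simp
    have h2 : (q * N) * ((1 - p) / q) < (q * N) * (1 - g) :=
      (mul_lt_mul_iff_right₀ (by positivity)).2 h1g
    have h3 : (q * N) * (1 - g) ≤ S.card * (1 - g) :=
      mul_le_mul_of_nonneg_right hScard (by linarith)
    linarith
  have hsum_lt : (∑ j, F j x) < N * p := by nlinarith
  have : (∑ j, F j x) / N < p := by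
    rw [div_lt_iff₀ hNpos]; linarith [hsum_lt]
  linarith
end

section
/- Combine the two quantile bounds: with F̄ as above and q > 3/4, the interquartile range I = F̄^{-1}(0.75) - F̄^{-1}(0.25) of F̄ satisfies σ(G^{-1}(1 - 0.25/q) - G^{-1}(0.25/q)) ≤ I ≤ σ(G^{-1}(0.75/q) - G^{-1}(1 - 0.75/q)), and in particular both bounds are finite and the lower bound is strictly positive when additionally q > 1/2 and G^{-1} is strictly increasing. -/
open Finset

/-- Bounds on the interquartile range of a mixture CDF in which at least a
fraction `q > 3/4` of the components equal `G(·/σ)`, together with strict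
positivity of the lower bound when `Ginv` is strictly increasing. -/
theorem mixture_iqr_bounds
    (N : ℕ) (hN : 0 < N) (F : Fin N → ℝ → ℝ)
    (hFmono : ∀ j, Monotone (F j))
    (hF0 : ∀ j x, 0 ≤ F j x) (hF1 : ∀ j x, F j x ≤ 1)
    (hFbot : ∀ j, Filter.Tendsto (F j) Filter.atBot (nhds 0))
    (hFtop : ∀ j, Filter.Tendsto (F j) Filter.atTop (nhds 1))
    (G Ginv : ℝ → ℝ) (hG : StrictMono G) (hGcont : Continuous G)
    (hGinv : ∀ y, 0 < y → y < 1 → G (Ginv y) = y)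
    (σ : ℝ) (hσ : 0 < σ)
    (q : ℝ) (hq0 : 3 / 4 < q) (hq1 : q ≤ 1)
    (S : Finset (Fin N)) (hScard : q * N ≤ S.card)
    (hSgood : ∀ j ∈ S, ∀ x, F j x = G (x / σ)) :
    σ * (Ginv (1 - 0.25 / q) - Ginv (0.25 / q))
      ≤ sInf {x : ℝ | (0.75 : ℝ) ≤ (∑ j, F j x) / N}
          - sInf {x : ℝ | (0.25 : ℝ) ≤ (∑ j, F j x) / N} ∧
    sInf {x : ℝ | (0.75 : ℝ) ≤ (∑ j, F j x) / N}
          - sInf {x : ℝ | (0.25 : ℝ) ≤ (∑ j, F j x) / N}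
      ≤ σ * (Ginv (0.75 / q) - Ginv (1 - 0.75 / q)) ∧
    (StrictMono Ginv → 0 < σ * (Ginv (1 - 0.25 / q) - Ginv (0.25 / q))) := by
  have hNR : (0:ℝ) < (N:ℝ) := by exact_mod_cast hN
  have hq0' : (0:ℝ) < q := by linarith
  -- S is nonempty
  have hSne : S.Nonempty := by
    rw [← Finset.card_pos]
    by_contra h
    push_neg at h
    interval_cases hc : S.card
    · simp [hc] at hScard
      nlinarith
  obtain ⟨j0, hj0⟩ := hSne
  -- G takes values in [0,1]
  have hG01 : ∀ t : ℝ, 0 ≤ G t ∧ G t ≤ 1 := by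
    intro t
    have h := hSgood j0 hj0 (σ * t)
    rw [mul_div_cancel_left₀ _ hσ.ne'] at h
    exact ⟨h ▸ hF0 j0 (σ * t), h ▸ hF1 j0 (σ * t)⟩
  have hcardN : (S.card : ℝ) ≤ N := by
    exact_mod_cast Finset.card_le_card (Finset.subset_univ S) |>.trans_eq (by simp)
  -- lower bound on mixture
  have hlow : ∀ x : ℝ, q * G (x / σ) ≤ (∑ j, F j x) / N := by
    intro x
    rw [le_div_iff₀ hNR]
    have h1 : ∑ j ∈ S, F j x ≤ ∑ j, F j x :=
      Finset.sum_le_sum_of_subset_of_nonneg (Finset.subset_univ S)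
        (fun j _ _ => hF0 j x)
    have h2 : ∑ j ∈ S, F j x = S.card * G (x / σ) := by
      rw [Finset.sum_congr rfl (fun j hj => hSgood j hj x)]
      simp [mul_comm]
    have hg := (hG01 (x / σ)).1
    nlinarith
  -- upper bound on mixture
  have hup : ∀ x : ℝ, (∑ j, F j x) / N ≤ q * G (x / σ) + (1 - q) := by
    intro x
    rw [div_le_iff₀ hNR]
    have h2 : ∑ j ∈ S, F j x = S.card * G (x / σ) := by
      rw [Finset.sum_congr rfl (fun j hj => hSgood j hj x)]
      simp [mul_comm]
    have h3 : ∑ j ∈ Sᶜ, F j x ≤ (Sᶜ.card : ℝ) := by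
      calc ∑ j ∈ Sᶜ, F j x ≤ ∑ _j ∈ Sᶜ, (1:ℝ) :=
            Finset.sum_le_sum (fun j _ => hF1 j x)
        _ = Sᶜ.card := by simp
    have h4 : (Sᶜ.card : ℝ) = N - S.card := by
      have := Finset.card_compl S
      rw [this]
      have : S.card ≤ Fintype.card (Fin N) := Finset.card_le_univ S
      push_cast [Nat.cast_sub this]
      simp
    have h1 : ∑ j, F j x = ∑ j ∈ S, F j x + ∑ j ∈ Sᶜ, F j x :=
      (Finset.sum_add_sum_compl S _).symm
    have hg := (hG01 (x / σ)).2
    nlinarith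
  -- generic quantile bounds
  have key : ∀ p : ℝ, 1 - q < p → p < q →
      σ * Ginv (1 - (1 - p) / q) ≤ sInf {x : ℝ | p ≤ (∑ j, F j x) / N} ∧
      sInf {x : ℝ | p ≤ (∑ j, F j x) / N} ≤ σ * Ginv (p / q) := by
    intro p hp1 hp2
    have hp0 : 0 < p := by linarith
    have hplt1 : p < 1 := by linarith
    have hpq0 : 0 < p / q := div_pos hp0 hq0'
    have hpq1 : p / q < 1 := (div_lt_one hq0').mpr hp2
    have hmem : σ * Ginv (p / q) ∈ {x : ℝ | p ≤ (∑ j, F j x) / N} := by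
      have h := hlow (σ * Ginv (p / q))
      rw [mul_div_cancel_left₀ _ hσ.ne', hGinv _ hpq0 hpq1] at h
      have hqp : q * (p / q) = p := by field_simp
      exact Set.mem_setOf.mpr (by linarith)
    set c : ℝ := 1 - (1 - p) / q with hc_def
    have hc0 : 0 < c := by
      have : (1 - p) / q < 1 := (div_lt_one hq0').mpr (by linarith)
      simp only [hc_def]; linarith
    have hc1 : c < 1 := by
      have : 0 < (1 - p) / q := div_pos (by linarith) hq0'
      simp only [hc_def]; linarith
    have hGc : G (Ginv c) = c := hGinv _ hc0 hc1
    have hlb : ∀ x ∈ {x : ℝ | p ≤ (∑ j, F j x) / N}, σ * Ginv c ≤ x := by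
      intro x hx
      have hx' : p ≤ (∑ j, F j x) / N := hx
      have h2 := hup x
      have hGx : c ≤ G (x / σ) := by
        have h3 : p ≤ q * G (x / σ) + (1 - q) := le_trans hx' h2
        have h4 : (p - (1 - q)) / q ≤ G (x / σ) := by
          rw [div_le_iff₀ hq0']; nlinarith [(hG01 (x / σ)).1]
        have h5 : c = (p - (1 - q)) / q := by
          simp only [hc_def]; field_simp; ring
        linarith [h5 ▸ h4]
      by_contra h
      push_neg at h
      have hxs : x / σ < Ginv c := by
        rw [div_lt_iff₀ hσ]; linarith [mul_comm σ (Ginv c)]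
      have := hG hxs
      rw [hGc] at this
      linarith
    have hbdd : BddBelow {x : ℝ | p ≤ (∑ j, F j x) / N} := ⟨σ * Ginv c, hlb⟩
    exact ⟨le_csInf ⟨_, hmem⟩ hlb, csInf_le hbdd hmem⟩
  have h75 := key 0.75 (by norm_num; linarith) (by norm_num; linarith)
  have h25 := key 0.25 (by norm_num; linarith) (by norm_num; linarith)
  have e75 : (1:ℝ) - (1 - 0.75) / q = 1 - 0.25 / q := by norm_num
  have e25 : (1:ℝ) - (1 - 0.25) / q = 1 - 0.75 / q := by norm_num
  rw [e75] at h75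
  rw [e25] at h25
  refine ⟨?_, ?_, ?_⟩
  · rw [mul_sub]; linarith [h75.1, h25.2]
  · rw [mul_sub]; linarith [h75.2, h25.1]
  · intro hGm
    have hhalf : 0.25 / q < 1 - 0.25 / q := by
      have : (0.25:ℝ) / q < 0.5 := by
        rw [div_lt_iff₀ hq0']; nlinarith
      linarith
    exact mul_pos hσ (sub_pos.mpr (hGm hhalf))
end
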